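/- If a nonnegative function f : [0,T] → ℝ satisfies f(t) ≤ a·t³ + b·t·∫₀ᵗ f(s) ds for all t in [0,T], where a, b ≥ 0, then f(t) ≤ a·t³·exp(b·t²) for all t in [0,T]. -/

import Mathlib

/-!
Fix `t`. On `[0, t]` the coefficients can be frozen at their values at `t`: for `s ≤ t`,
`f s ≤ a t³ + b t ∫₀ˢ f`, because `f ≥ 0`. The primitive `F = ∫₀ f` then satisfies the
constant-coefficient differential inequality `F' ≤ b t F + a t³` with `F 0 = 0`, so the classical
Grönwall bound gives `b t F(t) + a t³ ≤ a t³ exp (b t · t)`, and hence the claim at time `t`.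
-/

open Set Real intervalIntegral

theorem mul_gronwallBound_zero_add (K ε x : ℝ) :
    K * gronwallBound 0 K ε x + ε = ε * exp (K * x) := by
  by_cases hK : K = 0
  · simp [hK]
  · rw [gronwallBound_of_K_ne_0 hK]
    field_simp
    ring

section IntegralGronwall

variable {g : ℝ → ℝ} {K ε a b : ℝ}

theorem integral_le_gronwallBound (hg : Continuous g)
    (hbound : ∀ s ∈ Ico a b, g s ≤ K * (∫ u in a..s, g u) + ε) :
    ∀ s ∈ Icc a b, ∫ u in a..s, g u ≤ gronwallBound 0 K ε (s - a) := by
  refine le_gronwallBound_of_liminf_deriv_right_le (f' := g)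
    (continuous_primitive hg.intervalIntegrable a).continuousOn
    (fun x _ r hr => ?_) (by simp) hbound
  exact (hg.integral_hasStrictDerivAt a x).hasDerivAt.hasDerivWithinAt.liminf_right_slope_le hr

theorem le_mul_exp_of_le_mul_integral_add (hg : Continuous g) (hK : 0 ≤ K) (hab : a ≤ b)
    (hbound : ∀ s ∈ Icc a b, g s ≤ K * (∫ u in a..s, g u) + ε) :
    g b ≤ ε * exp (K * (b - a)) := by
  have hprimitive := integral_le_gronwallBound hg (fun s hs => hbound s (Ico_subset_Icc_self hs))
    b ⟨hab, le_rfl⟩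
  calc g b ≤ K * (∫ u in a..b, g u) + ε := hbound b ⟨hab, le_rfl⟩
    _ ≤ K * gronwallBound 0 K ε (b - a) + ε := by gcongr
    _ = ε * exp (K * (b - a)) := mul_gronwallBound_zero_add K ε (b - a)

end IntegralGronwall

theorem gronwall_cubic_bound_general
    (f : ℝ → ℝ) (T a b : ℝ)
    (ha : 0 ≤ a) (hb : 0 ≤ b)
    (hcont : ContinuousOn f (Set.Icc 0 T))
    (hnonneg : ∀ t ∈ Set.Icc 0 T, 0 ≤ f t)
    (hineq : ∀ t ∈ Set.Icc 0 T, f t ≤ a * t ^ 3 + b * t * ∫ s in (0:ℝ)..t, f s) :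
    ∀ t ∈ Set.Icc 0 T, f t ≤ a * t ^ 3 * Real.exp (b * t ^ 2) := by
  rintro t ⟨ht0, htT⟩
  have hsub : Icc 0 t ⊆ Icc 0 T := Icc_subset_Icc_right htT
  set g := IccExtend ht0 ((Icc 0 t).domRestrict f)
  have hg : Continuous g := continuous_IccExtend_iff.2 (hcont.mono hsub).domRestrict
  have hgf : EqOn g f (Icc 0 t) := fun s hs => IccExtend_of_mem ht0 _ hs
  have hfrozen : ∀ s ∈ Icc 0 t, g s ≤ b * t * (∫ u in 0..s, g u) + a * t ^ 3 := by
    intro s hs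
    have hs_sub : uIcc 0 s ⊆ Icc 0 t := by
      rw [uIcc_of_le hs.1]; exact Icc_subset_Icc_right hs.2
    have hF : 0 ≤ ∫ u in 0..s, f u :=
      integral_nonneg hs.1 fun u hu => hnonneg u (hsub (Icc_subset_Icc_right hs.2 hu))
    rw [hgf hs, integral_congr (hgf.mono hs_sub)]
    calc f s ≤ a * s ^ 3 + b * s * ∫ u in 0..s, f u := hineq s (hsub hs)
      _ ≤ a * t ^ 3 + b * t * ∫ u in 0..s, f u := by gcongr; exacts [hs.1, hs.2, hs.2]
      _ = b * t * (∫ u in 0..s, f u) + a * t ^ 3 := add_comm _ _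
  have hbound := le_mul_exp_of_le_mul_integral_add hg (mul_nonneg hb ht0) ht0 hfrozen
  rwa [hgf ⟨ht0, le_rfl⟩, sub_zero, mul_assoc b, ← sq] at hbound

theorem gronwall_cubic_bound
    (f : ℝ → ℝ) (T a b : ℝ)
    (hT : 0 ≤ T) (ha : 0 ≤ a) (hb : 0 ≤ b)
    (hcont : ContinuousOn f (Set.Icc 0 T))
    (hnonneg : ∀ t ∈ Set.Icc 0 T, 0 ≤ f t)
    (hineq : ∀ t ∈ Set.Icc 0 T, f t ≤ a * t ^ 3 + b * t * ∫ s in (0:ℝ)..t, f s) :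
    ∀ t ∈ Set.Icc 0 T, f t ≤ a * t ^ 3 * Real.exp (b * t ^ 2) :=
  gronwall_cubic_bound_general f T a b ha hb hcont hnonneg hineq
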